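/- (Risk rewriting identity, discrete form.) Let k ≥ 2, 1 ≤ m ≤ k-1, p a pmf on Y = {1,...,k}, and ℓ : Y → ℝ any function (the loss of a fixed predictor at a fixed instance). Define the subset-average loss ℓ̄(L) := (1/m) Σ_{j ∈ L} ℓ(j), and let q1, q0 be the response-conditioned laws q1(L) = (1/C(k-1,m-1)) Σ_{j∈L} p(j), q0(L) = (1/C(k-1,m)) Σ_{j∉L} p(j) on Q_m. Then Σ_y p(y) ℓ(y) = m · Σ_{L∈Q_m} q1(L) ℓ̄(L) − (m-1) · Σ_{L∈Q_m} q0(L) ℓ̄(L). -/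

import Mathlib

/-!
Since `∑ p = 1`, the unnormalised `q1`-weight `∑_{j ∈ L} p j` of a subset is `1` minus its
`q0`-weight `∑_{j ∉ L} p j`, so both expectations reduce to `∑_L ∑_{j ∉ L} p j * ∑_{i ∈ L} ℓ i`.
Double counting evaluates it: a label `i` lies in `C(k-1, m-1)` subsets, and for `j ≠ i` exactly
`C(k-2, m-1)` of them miss `j`. What remains is the binomial identity
`C(k-2, m-1) * (1 / C(k-1, m-1) + (m-1) / (m C(k-1, m))) = 1`,
i.e. `(k-m)/(k-1) + (m-1)/(k-1) = 1`.
-/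

namespace Finset

variable {α β : Type*} [DecidableEq α]

theorem sum_powersetCard_sum_mem_comm [AddCommMonoid β] (s : Finset α) (m : ℕ)
    (g : Finset α → α → β) :
    ∑ L ∈ s.powersetCard m, ∑ j ∈ L, g L j = ∑ j ∈ s, ∑ L ∈ s.powersetCard m with j ∈ L, g L j :=
  sum_comm' fun L j => by
    simp only [mem_filter, mem_powersetCard]
    exact ⟨fun h => ⟨⟨h.1, h.2⟩, h.1.1 h.2⟩, fun h => h.1⟩

theorem sum_powersetCard_sdiff_comm [AddCommMonoid β] (s : Finset α) (m : ℕ)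
    (g : Finset α → α → β) :
    ∑ L ∈ s.powersetCard m, ∑ j ∈ s \ L, g L j
      = ∑ j ∈ s, ∑ L ∈ s.powersetCard m with j ∉ L, g L j :=
  sum_comm' fun L j => by
    simp only [mem_filter, mem_sdiff]
    tauto

theorem filter_powersetCard_notMem (s : Finset α) (m : ℕ) (a : α) :
    {L ∈ s.powersetCard m | a ∉ L} = (s.erase a).powersetCard m := by
  ext L
  simp only [mem_filter, mem_powersetCard, subset_erase]
  tauto

theorem sum_powersetCard_sum_sdiff [AddCommMonoid β] (s : Finset α) (m : ℕ) (f : α → β) :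
    ∑ L ∈ s.powersetCard m, ∑ j ∈ s \ L, f j = (#s - 1).choose m • ∑ j ∈ s, f j := by
  rw [sum_powersetCard_sdiff_comm, smul_sum]
  refine sum_congr rfl fun j hj => ?_
  rw [sum_const, filter_powersetCard_notMem, card_powersetCard, card_erase_of_mem hj]

theorem sum_powersetCard_succ_sum [AddCommMonoid β] (s : Finset α) (m : ℕ) (f : α → β) :
    ∑ L ∈ s.powersetCard (m + 1), ∑ j ∈ L, f j = (#s - 1).choose m • ∑ j ∈ s, f j := by
  rw [sum_powersetCard_sum_mem_comm, smul_sum]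
  refine sum_congr rfl fun j hj => ?_
  have := card_filter_powersetCard_subset {j} s (m + 1) (by simpa) (by simp)
  simp only [singleton_subset_iff, card_singleton, Nat.add_sub_cancel] at this
  rw [sum_const, this]

theorem sum_powersetCard_succ_filter_mem_sum_sdiff [AddCommMonoid β] (s : Finset α) (m : ℕ)
    (f : α → β) {a : α} (ha : a ∈ s) :
    ∑ L ∈ s.powersetCard (m + 1) with a ∈ L, ∑ j ∈ s \ L, f j
      = (#s - 2).choose m • ∑ j ∈ s.erase a, f j := by
  have hfilter : {L ∈ s.powersetCard (m + 1) | a ∈ L}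
      = ((s.erase a).powersetCard m).image (insert a) := by
    simpa [sdiff_singleton_eq_erase, union_comm, ← insert_eq] using
      filter_powersetCard_subset {a} s (m + 1) (by simpa) (by simp)
  have hcard : #s - 2 = #(s.erase a) - 1 := by rw [card_erase_of_mem ha]; rfl
  rw [hfilter, sum_image, hcard, ← sum_powersetCard_sum_sdiff]
  · exact sum_congr rfl fun L _ => by rw [sdiff_insert, erase_sdiff_comm]
  · intro L hL L' hL' h
    simp only [mem_coe, mem_powersetCard, subset_erase] at hL hL'
    rw [← erase_insert hL.1.2, h, erase_insert hL'.1.2]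

theorem sum_powersetCard_succ_sum_sdiff_mul_sum [CommSemiring β] (s : Finset α) (m : ℕ)
    (f g : α → β) :
    ∑ L ∈ s.powersetCard (m + 1), (∑ j ∈ s \ L, f j) * ∑ i ∈ L, g i
      = (#s - 2).choose m * ∑ i ∈ s, g i * ∑ j ∈ s.erase i, f j := by
  conv_lhs => simp only [mul_sum, sum_powersetCard_sum_mem_comm, ← sum_mul]
  rw [mul_sum]
  refine sum_congr rfl fun i hi => ?_
  rw [sum_powersetCard_succ_filter_mem_sum_sdiff s m f hi, nsmul_eq_mul]
  ring

end Finset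

open Finset

theorem Nat.cast_choose_mul_inv_add_eq_one (n r : ℕ) (h : r ≤ n) :
    (n.choose r : ℝ) * (1 / (n + 1).choose r + r / ((r + 1) * (n + 1).choose (r + 1))) = 1 := by
  have hpascal : ((n + 1 : ℕ) : ℝ) * n.choose r = (n + 1).choose (r + 1) * (r + 1 : ℕ) := by
    exact_mod_cast Nat.add_one_mul_choose_eq n r
  have habsorb : (n.choose r : ℝ) * (n + 1 : ℕ) = (n + 1).choose r * (n + 1 - r : ℕ) := by
    exact_mod_cast Nat.choose_mul_succ_eq n r
  have hchoose_ne : ((n + 1).choose r : ℝ) ≠ 0 := by exact_mod_cast (Nat.choose_pos (by omega)).ne'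
  have hchoose_succ_ne : ((n + 1).choose (r + 1) : ℝ) ≠ 0 := by
    exact_mod_cast (Nat.choose_pos (by omega)).ne'
  rw [Nat.cast_sub (by omega)] at habsorb
  push_cast at hpascal habsorb
  field_simp
  linear_combination (n.choose r : ℝ) * habsorb + ((n + 1).choose r - n.choose r : ℝ) * hpascal

theorem risk_rewriting_identity_general (k m : ℕ) (hm1 : 1 ≤ m)
    (hm2 : m ≤ k - 1) (p : Fin k → ℝ) (hsum : ∑ y, p y = 1)
    (ℓ : Fin k → ℝ) :
    ∑ y, p y * ℓ y =
      (m : ℝ) * ∑ L ∈ (Finset.univ : Finset (Fin k)).powersetCard m,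
          ((1 / (Nat.choose (k - 1) (m - 1) : ℝ)) * ∑ j ∈ L, p j) *
            ((1 / (m : ℝ)) * ∑ j ∈ L, ℓ j)
      - ((m : ℝ) - 1) * ∑ L ∈ (Finset.univ : Finset (Fin k)).powersetCard m,
          ((1 / (Nat.choose (k - 1) m : ℝ)) * ∑ j ∈ Lᶜ, p j) *
            ((1 / (m : ℝ)) * ∑ j ∈ L, ℓ j) := by
  obtain ⟨r, rfl⟩ : ∃ r, m = r + 1 := ⟨m - 1, by omega⟩
  obtain ⟨n, rfl⟩ : ∃ n, k = n + 2 := ⟨k - 2, by omega⟩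
  set P := (univ : Finset (Fin (n + 2))).powersetCard (r + 1)
  have hcompl : ∀ L : Finset (Fin (n + 2)), ∑ j ∈ L, p j = 1 - ∑ j ∈ univ \ L, p j := fun L => by
    rw [← hsum, ← sum_add_sum_compl L p, compl_eq_univ_sdiff]; ring
  have hq1_expand : ∀ c d : ℝ, ∑ L ∈ P, (c * ∑ j ∈ L, p j) * (d * ∑ j ∈ L, ℓ j) = c * d *
      (∑ L ∈ P, ∑ j ∈ L, ℓ j - ∑ L ∈ P, (∑ j ∈ univ \ L, p j) * ∑ j ∈ L, ℓ j) := fun c d => by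
    rw [← sum_sub_distrib, mul_sum]
    exact sum_congr rfl fun L _ => by rw [hcompl L]; ring
  have hq0_expand : ∀ c d : ℝ, ∑ L ∈ P, (c * ∑ j ∈ Lᶜ, p j) * (d * ∑ j ∈ L, ℓ j) = c * d *
      ∑ L ∈ P, (∑ j ∈ univ \ L, p j) * ∑ j ∈ L, ℓ j := fun c d => by
    rw [mul_sum]
    exact sum_congr rfl fun L _ => by rw [compl_eq_univ_sdiff]; ring
  have hsubset_sum := sum_powersetCard_succ_sum univ r ℓ
  have hcross := sum_powersetCard_succ_sum_sdiff_mul_sum univ r p ℓ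
  simp only [sum_erase_eq_sub (mem_univ _), hsum, card_univ, Fintype.card_fin,
    Nat.add_sub_cancel, nsmul_eq_mul] at hsubset_sum hcross
  have hweighted : ∑ x, ℓ x * (1 - p x) = ∑ x, ℓ x - ∑ x, p x * ℓ x := by
    simp only [mul_one_sub, sum_sub_distrib, mul_comm]
  rw [hq1_expand, hq0_expand, hsubset_sum, hcross, show n + 2 - 1 = n + 1 by omega,
    Nat.add_sub_cancel, hweighted]
  have hbinom := Nat.cast_choose_mul_inv_add_eq_one n r (by omega)
  have hchoose_ne : ((n + 1).choose r : ℝ) ≠ 0 := by exact_mod_cast (Nat.choose_pos (by omega)).ne'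
  have hchoose_succ_ne : ((n + 1).choose (r + 1) : ℝ) ≠ 0 := by
    exact_mod_cast (Nat.choose_pos (by omega)).ne'
  push_cast
  field_simp at hbinom ⊢
  linear_combination (∑ j, ℓ j - ∑ x, p x * ℓ x) * hbinom

/-- Risk rewriting identity (discrete, single-instance form): the supervised risk
equals `m` times the `s=1`-conditioned expected subset-average loss minus `m-1`
times the `s=0`-conditioned expected subset-average loss. -/
theorem risk_rewriting_identity (k m : ℕ) (hk : 2 ≤ k) (hm1 : 1 ≤ m)
    (hm2 : m ≤ k - 1) (p : Fin k → ℝ) (hp : ∀ y, 0 ≤ p y) (hsum : ∑ y, p y = 1)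
    (ℓ : Fin k → ℝ) :
    ∑ y, p y * ℓ y =
      (m : ℝ) * ∑ L ∈ (Finset.univ : Finset (Fin k)).powersetCard m,
          ((1 / (Nat.choose (k - 1) (m - 1) : ℝ)) * ∑ j ∈ L, p j) *
            ((1 / (m : ℝ)) * ∑ j ∈ L, ℓ j)
      - ((m : ℝ) - 1) * ∑ L ∈ (Finset.univ : Finset (Fin k)).powersetCard m,
          ((1 / (Nat.choose (k - 1) m : ℝ)) * ∑ j ∈ Lᶜ, p j) *
            ((1 / (m : ℝ)) * ∑ j ∈ L, ℓ j) :=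
  risk_rewriting_identity_general k m hm1 hm2 p hsum ℓ
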